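/- arXiv:2208.11115 — 3 statements merged into one kernel-verified Lean document; each statement's English description precedes it below -/
import Mathlib

section
/- Let G be an additive commutative group and let c : Fin r → G be a finite family of elements, with N the additive submonoid of G generated by the c i. Then for every subset V of (the underlying set of) N there exists a finite subset F ⊆ V such that for every v ∈ V there is some f ∈ F with v − f ∈ N. -/
/-! A family `a : Fin r → ℕ` of multiplicities maps to `∑ i, a i • c i`, and this map is onto `N`
and monotone from the componentwise order to the order induced by `N`. By Dickson's lemma
`Fin r → ℕ` is well-quasi-ordered, so every preimage set has finitely many minimal elements and
lies above them; their images form `F`. -/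

open Set

theorem Set.exists_finite_subset_forall_exists_le {α : Type*} [PartialOrder α]
    [WellQuasiOrderedLE α] (s : Set α) : ∃ t ⊆ s, t.Finite ∧ ∀ a ∈ s, ∃ b ∈ t, b ≤ a := by
  have hpwo := isPWO_of_wellQuasiOrderedLE s
  refine ⟨{x | Minimal (· ∈ s) x}, setOfPred_minimal_subset s,
    (setOfPred_minimal_antichain _).finite_of_partiallyWellOrderedOn
      (hpwo.mono (setOfPred_minimal_subset s)), fun a ha => ?_⟩
  obtain ⟨b, hba, hb⟩ := hpwo.exists_le_minimal ha
  exact ⟨b, hb, hba⟩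

theorem AddSubmonoid.sum_nsmul_sub_sum_nsmul_mem_closure {ι G : Type*} [Fintype ι]
    [AddCommGroup G] (c : ι → G) {a b : ι → ℕ} (hba : b ≤ a) :
    ∑ i, a i • c i - ∑ i, b i • c i ∈ AddSubmonoid.closure (range c) := by
  refine mem_closure_range_iff_of_fintype.2 ⟨a - b, ?_⟩
  rw [sub_eq_iff_eq_add, ← Finset.sum_add_distrib]
  refine Finset.sum_congr rfl fun i _ => ?_
  rw [Pi.sub_apply, ← add_nsmul, tsub_add_cancel_of_le (hba i)]

/-- Dickson-type finiteness: any subset `V` of the submonoid `N` generated by a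
finite family `c : Fin r → G` admits a finite subset `F ⊆ V` such that every
element of `V` dominates some element of `F` in the preorder induced by `N`. -/
theorem stmt0 {G : Type*} [AddCommGroup G] {r : ℕ} (c : Fin r → G)
    (N : AddSubmonoid G) (hN : N = AddSubmonoid.closure (Set.range c))
    (V : Set G) (hV : V ⊆ (N : Set G)) :
    ∃ F : Finset G, ↑F ⊆ V ∧ ∀ v ∈ V, ∃ f ∈ F, v - f ∈ N := by
  subst hN
  set φ : (Fin r → ℕ) → G := fun a => ∑ i, a i • c i
  obtain ⟨t, htV, ht, hcover⟩ := (φ ⁻¹' V).exists_finite_subset_forall_exists_le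
  refine ⟨(ht.image φ).toFinset, by simpa using image_subset_iff.2 htV, fun v hv => ?_⟩
  obtain ⟨a, rfl⟩ := AddSubmonoid.mem_closure_range_iff_of_fintype.1 (hV hv)
  obtain ⟨b, hbt, hba⟩ := hcover a hv
  exact ⟨φ b, by simpa using mem_image_of_mem φ hbt,
    AddSubmonoid.sum_nsmul_sub_sum_nsmul_mem_closure c hba⟩
end

section
/- Let G be an additive commutative group and let c : Fin r → G be a finite family of elements, with N the additive submonoid of G generated by the c i. Call an element v of a subset V ⊆ G a minimal element of V (with respect to the preorder induced by N) if every w ∈ V with v − w ∈ N satisfies w = v. If b ∈ G and V ⊆ G satisfies v − b ∈ N for every v ∈ V (i.e. V is contained in the translate b + N), then the set of minimal elements of V is finite. -/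
/-!
The map `n ↦ b + ∑ i, n i • c i` from `ℕ^r` onto `b + N` is monotone for the preorder
`v ≤ w ↔ w - v ∈ N`. By Dickson's lemma `ℕ^r` is a well-quasi-order, hence so is its
image `b + N`. Minimal elements of `V ⊆ b + N` are pairwise incomparable, and an antichain
in a well-quasi-ordered set is finite.
-/

open Set

theorem isAntichain_setOf_forall_imp_eq {α : Type*} (r : α → α → Prop) (V : Set α) :
    IsAntichain r {v ∈ V | ∀ w ∈ V, r w v → w = v} :=
  fun _ hv _ hw hne hvw => hne (hw.2 _ hv.1 hvw)

theorem AddSubmonoid.sum_nsmul_sub_sum_nsmul_mem_closure_range {G ι : Type*} [AddCommGroup G]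
    [Fintype ι] (c : ι → G) {m n : ι → ℕ} (hmn : m ≤ n) :
    ∑ i, n i • c i - ∑ i, m i • c i ∈ AddSubmonoid.closure (range c) := by
  rw [AddSubmonoid.mem_closure_range_iff_of_fintype]
  refine ⟨n - m, sub_eq_of_eq_add ?_⟩
  rw [← Finset.sum_add_distrib]
  exact Finset.sum_congr rfl fun i _ => by
    rw [← add_smul, Pi.sub_apply, tsub_add_cancel_of_le (hmn i)]

theorem AddSubmonoid.partiallyWellOrderedOn_translate_closure_range {G ι : Type*}
    [AddCommGroup G] [Fintype ι] (c : ι → G) (b : G) :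
    {v | v - b ∈ AddSubmonoid.closure (range c)}.PartiallyWellOrderedOn
      (fun v w => w - v ∈ AddSubmonoid.closure (range c)) := by
  have himage : {v | v - b ∈ AddSubmonoid.closure (range c)} =
      (fun n : ι → ℕ => b + ∑ i, n i • c i) '' univ := by
    ext v
    simp [AddSubmonoid.mem_closure_range_iff_of_fintype, sub_eq_iff_eq_add', eq_comm]
  rw [himage]
  refine (partiallyWellOrderedOn_of_wellQuasiOrdered wellQuasiOrdered_le _).image_of_monotone_on ?_
  rintro m - n - hmn
  simpa only [add_sub_add_left_eq_sub] using sum_nsmul_sub_sum_nsmul_mem_closure_range c hmn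

/-- A subset `V` of a translate `b + N` of the submonoid `N` generated by a finite
family `c : Fin r → G` has only finitely many minimal elements with respect to the
preorder induced by `N` (`a ≤ b` iff `b - a ∈ N`). -/
theorem stmt2 {G : Type*} [AddCommGroup G] {r : ℕ} (c : Fin r → G)
    (N : AddSubmonoid G) (hN : N = AddSubmonoid.closure (Set.range c))
    (b : G) (V : Set G) (hV : ∀ v ∈ V, v - b ∈ N) :
    {v ∈ V | ∀ w ∈ V, v - w ∈ N → w = v}.Finite := by
  subst hN
  refine (isAntichain_setOf_forall_imp_eq _ V).finite_of_partiallyWellOrderedOn ?_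
  exact (AddSubmonoid.partiallyWellOrderedOn_translate_closure_range c b).mono
    fun v hv => hV v hv.1
end

section
/- Let S be a commutative ring, f : Fin s → S a finite family of elements, and I = Ideal.span (Set.range f). Let φ : MvPolynomial (Fin s) S →ₐ[S] Polynomial S be the S-algebra homomorphism sending the variable T_i to f i · X, i.e. φ = aeval (fun i => Polynomial.monomial 1 (f i)). Then for every natural number n, the image under φ of the S-submodule of homogeneous polynomials of total degree n equals the image of I^n (viewed as an S-submodule of S) under the S-linear map a ↦ a·X^n; that is, Submodule.map φ.toLinearMap (MvPolynomial.homogeneousSubmodule (Fin s) S n) = Submodule.map (Polynomial.monomial n) (I^n). -/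
/-!
A form `p` of degree `n` satisfies `p(f₁t, …, f_st) = p(f₁, …, f_s) tⁿ`, so the image of the
degree-`n` forms is `tⁿ` times their image under evaluation at `f`, and the latter is
`Iⁿ` (`Ideal.span_pow_eq_map_homogeneousSubmodule`).
-/

open MvPolynomial

namespace MvPolynomial

variable {σ R : Type*} [CommSemiring R] (f : σ → R)

theorem aeval_monomial_one_monomial (d : σ →₀ ℕ) (a : R) :
    aeval (fun i => Polynomial.monomial 1 (f i)) (monomial d a)
      = Polynomial.monomial d.degree (aeval f (monomial d a)) := by
  induction d using Finsupp.induction with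
  | zero => simp [Polynomial.monomial_zero_left]
  | single_add i k d _ _ ih =>
    rw [monomial_single_add, map_mul, map_mul, ih, map_pow, map_pow, aeval_X, aeval_X,
      Polynomial.monomial_pow, Polynomial.monomial_mul_monomial, map_add,
      Finsupp.degree_single, one_mul]

theorem IsHomogeneous.aeval_monomial_one {p : MvPolynomial σ R} {n : ℕ}
    (hp : p.IsHomogeneous n) :
    MvPolynomial.aeval (fun i => Polynomial.monomial 1 (f i)) p
      = Polynomial.monomial n (MvPolynomial.aeval f p) := by
  conv_lhs => rw [p.as_sum]
  conv_rhs => rw [p.as_sum]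
  simp only [map_sum]
  refine Finset.sum_congr rfl fun d hd => ?_
  have hdeg : d.degree = n := by
    rw [Finsupp.degree_eq_weight_one]
    exact hp (mem_support_iff.mp hd)
  rw [aeval_monomial_one_monomial, hdeg]

end MvPolynomial

/-- The graded surjection `R = S[T₁,…,T_s] ↠ S[It]`, `T_i ↦ f_i t`, identifies the
degree-`n` homogeneous part of `R` with `Iⁿ tⁿ`: the image of the homogeneous
polynomials of degree `n` under `aeval (fun i => f i • X)` equals the image of `Iⁿ`
under `a ↦ a·Xⁿ`. -/
theorem stmt6 {S : Type*} [CommRing S] {s : ℕ} (f : Fin s → S)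
    (I : Ideal S) (hI : I = Ideal.span (Set.range f))
    (φ : MvPolynomial (Fin s) S →ₐ[S] Polynomial S)
    (hφ : φ = MvPolynomial.aeval (fun i => Polynomial.monomial 1 (f i)))
    (n : ℕ) :
    Submodule.map φ.toLinearMap (MvPolynomial.homogeneousSubmodule (Fin s) S n)
      = Submodule.map (Polynomial.monomial n) (I ^ n) := by
  have hφ_eq_on_forms : Submodule.map φ.toLinearMap (homogeneousSubmodule (Fin s) S n)
      = Submodule.map (Polynomial.monomial n ∘ₗ (aeval f).toLinearMap)
          (homogeneousSubmodule (Fin s) S n) := by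
    ext q
    refine exists_congr fun p => and_congr_right fun hp => ?_
    rw [AlgHom.toLinearMap_apply, LinearMap.comp_apply, AlgHom.toLinearMap_apply, hφ,
      IsHomogeneous.aeval_monomial_one f hp]
  rw [hφ_eq_on_forms, Submodule.map_comp, ← Ideal.span_pow_eq_map_homogeneousSubmodule, hI]
end
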